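/- Let c : ℝ → ℝ be continuously differentiable with c(x) > 0 for all x, let τ : ℝ → ℝ be twice continuously differentiable with τ'(x) = √(c(x)) for all x, and let u : ℝ × ℝ → ℝ be twice continuously differentiable and satisfy c(x)·∂ₜₜu(x,t) = ∂ₓₓu(x,t) for all (x,t) ∈ ℝ². Define q(x,t) = u(x, t + τ(x)). Then q is twice continuously differentiable and for all (x,t) ∈ ℝ²: ∂ₓₓq(x,t) − 2·τ'(x)·∂ₜ∂ₓq(x,t) − τ''(x)·∂ₜq(x,t) = 0. -/

import Mathlib

/-!
Write `q = u ∘ Φ` with the shear `Φ (x, t) = (x, t + τ x)`. The chain rule gives `q_t = u_t ∘ Φ`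
and `q_x = (u_x + τ' u_t) ∘ Φ`; differentiating once more,
`q_xx - 2 τ' q_xt - τ'' q_t = (u_xx - τ'² u_tt + τ' (u_tx - u_xt)) ∘ Φ`.
The mixed partials of the `C²` function `u` agree, and `τ'² = c` turns the rest into the wave
operator `u_xx - c u_tt`, which vanishes.
-/

section PartialDerivatives

variable {F : Type*} [NormedAddCommGroup F] [NormedSpace ℝ F] {f : ℝ × ℝ → F}

noncomputable def partialX (f : ℝ × ℝ → F) (z : ℝ × ℝ) : F := fderiv ℝ f z (1, 0)

noncomputable def partialT (f : ℝ × ℝ → F) (z : ℝ × ℝ) : F := fderiv ℝ f z (0, 1)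

theorem ContinuousLinearMap.apply_prod_eq (L : ℝ × ℝ →L[ℝ] F) (a b : ℝ) :
    L (a, b) = a • L (1, 0) + b • L (0, 1) := by
  rw [← map_smul, ← map_smul, ← map_add]
  simp

theorem hasDerivAt_comp_curve {γ : ℝ → ℝ × ℝ} {a b s : ℝ}
    (hγ : HasDerivAt γ (a, b) s) (hf : DifferentiableAt ℝ f (γ s)) :
    HasDerivAt (fun r => f (γ r)) (a • partialX f (γ s) + b • partialT f (γ s)) s := by
  rw [partialX, partialT, ← ContinuousLinearMap.apply_prod_eq]
  exact hf.hasFDerivAt.comp_hasDerivAt s hγ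

theorem hasDerivAt_slice_fst {x t : ℝ} (hf : DifferentiableAt ℝ f (x, t)) :
    HasDerivAt (fun y => f (y, t)) (partialX f (x, t)) x := by
  simpa using hasDerivAt_comp_curve ((hasDerivAt_id x).prodMk (hasDerivAt_const x t)) hf

theorem hasDerivAt_slice_snd {x t : ℝ} (hf : DifferentiableAt ℝ f (x, t)) :
    HasDerivAt (fun s => f (x, s)) (partialT f (x, t)) t := by
  simpa using hasDerivAt_comp_curve ((hasDerivAt_const t x).prodMk (hasDerivAt_id t)) hf

theorem hasDerivAt_shear_fst {τ : ℝ → ℝ} {x t : ℝ} (hf : DifferentiableAt ℝ f (x, t + τ x))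
    (hτ : DifferentiableAt ℝ τ x) :
    HasDerivAt (fun y => f (y, t + τ y))
      (partialX f (x, t + τ x) + deriv τ x • partialT f (x, t + τ x)) x := by
  simpa using hasDerivAt_comp_curve
    ((hasDerivAt_id x).prodMk (hτ.hasDerivAt.const_add t)) hf

theorem hasDerivAt_slice_snd_add_const {x t a : ℝ} (hf : DifferentiableAt ℝ f (x, t + a)) :
    HasDerivAt (fun s => f (x, s + a)) (partialT f (x, t + a)) t := by
  simpa using hasDerivAt_comp_curve
    ((hasDerivAt_const t x).prodMk ((hasDerivAt_id t).add_const a)) hf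

theorem contDiff_partialX {n : WithTop ℕ∞} (hf : ContDiff ℝ (n + 1) f) :
    ContDiff ℝ n (partialX f) :=
  (hf.fderiv_right le_rfl).clm_apply contDiff_const

theorem contDiff_partialT {n : WithTop ℕ∞} (hf : ContDiff ℝ (n + 1) f) :
    ContDiff ℝ n (partialT f) :=
  (hf.fderiv_right le_rfl).clm_apply contDiff_const

theorem partialX_partialT_eq {z : ℝ × ℝ} (hf : ContDiffAt ℝ 2 f z) :
    partialX (partialT f) z = partialT (partialX f) z := by
  have hDf : DifferentiableAt ℝ (fderiv ℝ f) z :=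
    (hf.fderiv_right (m := 1) le_rfl).differentiableAt one_ne_zero
  unfold partialX partialT
  rw [fderiv_clm_apply hDf (differentiableAt_const _),
    fderiv_clm_apply hDf (differentiableAt_const _)]
  simpa using hf.isSymmSndFDerivAt (by simp) (1, 0) (0, 1)

theorem deriv_deriv_slice_fst {x t : ℝ} (hf : Differentiable ℝ f)
    (hfx : DifferentiableAt ℝ (partialX f) (x, t)) :
    deriv (fun y => deriv (fun y' => f (y', t)) y) x = partialX (partialX f) (x, t) := by
  simp only [fun y => (hasDerivAt_slice_fst (t := t) (hf (y, t))).deriv]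
  exact (hasDerivAt_slice_fst hfx).deriv

theorem deriv_deriv_slice_snd {x t : ℝ} (hf : Differentiable ℝ f)
    (hft : DifferentiableAt ℝ (partialT f) (x, t)) :
    deriv (fun s => deriv (fun s' => f (x, s')) s) t = partialT (partialT f) (x, t) := by
  simp only [fun s => (hasDerivAt_slice_snd (x := x) (hf (x, s))).deriv]
  exact (hasDerivAt_slice_snd hft).deriv

end PartialDerivatives

theorem deriv_comp_shear_secondOrder {u : ℝ × ℝ → ℝ} {τ : ℝ → ℝ} (hu : ContDiff ℝ 2 u)
    (hτ : ContDiff ℝ 2 τ) (x t : ℝ) :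
    deriv (fun y => deriv (fun y' => u (y', t + τ y')) y) x
        - 2 * deriv τ x * deriv (fun s => deriv (fun y => u (y, s + τ y)) x) t
        - deriv (deriv τ) x * deriv (fun s => u (x, s + τ x)) t
      = partialX (partialX u) (x, t + τ x)
        - deriv τ x ^ 2 * partialT (partialT u) (x, t + τ x) := by
  have hu' : Differentiable ℝ u := hu.differentiable two_ne_zero
  have hux : Differentiable ℝ (partialX u) :=
    (contDiff_partialX (n := 1) hu).differentiable one_ne_zero
  have hut : Differentiable ℝ (partialT u) :=
    (contDiff_partialT (n := 1) hu).differentiable one_ne_zero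
  have hτ' : Differentiable ℝ τ := hτ.differentiable two_ne_zero
  have hτ'' : Differentiable ℝ (deriv τ) := hτ.differentiable_deriv_two
  have hqx (y s : ℝ) : deriv (fun y' => u (y', s + τ y')) y
      = partialX u (y, s + τ y) + deriv τ y * partialT u (y, s + τ y) :=
    (hasDerivAt_shear_fst (hu' _) (hτ' y)).deriv
  set z : ℝ × ℝ := (x, t + τ x)
  have hqxx : HasDerivAt (fun y => partialX u (y, t + τ y) + deriv τ y * partialT u (y, t + τ y))
      (partialX (partialX u) z + deriv τ x * partialT (partialX u) z
        + (deriv (deriv τ) x * partialT u z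
          + deriv τ x * (partialX (partialT u) z + deriv τ x * partialT (partialT u) z))) x :=
    (hasDerivAt_shear_fst (hux z) (hτ' x)).add
      ((hτ'' x).hasDerivAt.mul (hasDerivAt_shear_fst (hut z) (hτ' x)))
  have hqxt : HasDerivAt (fun s => partialX u (x, s + τ x) + deriv τ x * partialT u (x, s + τ x))
      (partialT (partialX u) z + deriv τ x * partialT (partialT u) z) t :=
    (hasDerivAt_slice_snd_add_const (hux z)).add
      ((hasDerivAt_slice_snd_add_const (hut z)).const_mul (deriv τ x))
  simp only [hqx]
  rw [hqxx.deriv, hqxt.deriv, (hasDerivAt_slice_snd_add_const (hu' z)).deriv,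
    partialX_partialT_eq hu.contDiffAt]
  ring

theorem travel_time_change_of_variables_general
    (c τ : ℝ → ℝ) (u q : ℝ × ℝ → ℝ)
    (hcpos : ∀ x : ℝ, 0 < c x)
    (hτ : ContDiff ℝ 2 τ) (hτ' : ∀ x : ℝ, deriv τ x = Real.sqrt (c x))
    (hu : ContDiff ℝ 2 u)
    (hwave : ∀ x t : ℝ,
      c x * deriv (fun s => deriv (fun s' => u (x, s')) s) t
        = deriv (fun y => deriv (fun y' => u (y', t)) y) x)
    (hq : ∀ x t : ℝ, q (x, t) = u (x, t + τ x)) :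
    ContDiff ℝ 2 q ∧
    ∀ x t : ℝ,
      deriv (fun y => deriv (fun y' => q (y', t)) y) x
        - 2 * deriv τ x * deriv (fun s => deriv (fun y => q (y, s)) x) t
        - deriv (deriv τ) x * deriv (fun s => q (x, s)) t = 0 := by
  obtain rfl : q = fun p => u (p.1, p.2 + τ p.1) := funext fun p => hq p.1 p.2
  refine ⟨hu.comp (contDiff_fst.prodMk (contDiff_snd.add (hτ.comp contDiff_fst))),
    fun x t => ?_⟩
  have hu' : Differentiable ℝ u := hu.differentiable two_ne_zero
  have hwave' := hwave x (t + τ x)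
  rw [deriv_deriv_slice_snd hu' ((contDiff_partialT (n := 1) hu).differentiable one_ne_zero _),
    deriv_deriv_slice_fst hu' ((contDiff_partialX (n := 1) hu).differentiable one_ne_zero _)]
    at hwave'
  rw [deriv_comp_shear_secondOrder hu hτ, hτ', Real.sq_sqrt (hcpos x).le, ← hwave', sub_self]

/-- Equation (3.3): if `τ' = √c` and `c·u_tt = u_xx`, then the travel-time change of
variables `q(x,t) = u(x, t + τ(x))` is `C²` and satisfies
`q_xx − 2τ'·q_xt − τ''·q_t = 0`. -/
theorem travel_time_change_of_variables
    (c τ : ℝ → ℝ) (u q : ℝ × ℝ → ℝ)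
    (hc : ContDiff ℝ 1 c) (hcpos : ∀ x : ℝ, 0 < c x)
    (hτ : ContDiff ℝ 2 τ) (hτ' : ∀ x : ℝ, deriv τ x = Real.sqrt (c x))
    (hu : ContDiff ℝ 2 u)
    (hwave : ∀ x t : ℝ,
      c x * deriv (fun s => deriv (fun s' => u (x, s')) s) t
        = deriv (fun y => deriv (fun y' => u (y', t)) y) x)
    (hq : ∀ x t : ℝ, q (x, t) = u (x, t + τ x)) :
    ContDiff ℝ 2 q ∧
    ∀ x t : ℝ,
      deriv (fun y => deriv (fun y' => q (y', t)) y) x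
        - 2 * deriv τ x * deriv (fun s => deriv (fun y => q (y, s)) x) t
        - deriv (deriv τ) x * deriv (fun s => q (x, s)) t = 0 :=
  travel_time_change_of_variables_general c τ u q hcpos hτ hτ' hu hwave hq
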